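/- arXiv:1511.08947 — 5 statements merged into one kernel-verified Lean document; each statement's English description precedes it below -/
import Mathlib

section
/- Under the abstract energy setting for the Kelvin–Voigt model, the weighted energy estimate of Lemma 3.1 (eq. (3.3)) holds: for every t ≥ 0, ‖ι u(t)‖_H² + κ ‖u(t)‖_V² + β e^{−2αt} ∫₀ᵗ e^{2αs} ‖u(s)‖_V² ds ≤ e^{−2αt} (‖ι u(0)‖_H² + κ ‖u(0)‖_V²) + ((1 − e^{−2αt})/(2 ν λ₁ α)) M². -/
/-!
With `E = ‖ι u‖² + κ ‖u‖²`, the energy inequality reads `E'/2 + ν ‖u‖² ≤ ⟪f, ι u⟫`.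
Young's inequality with weight `ν λ₁` and the Poincaré inequality absorb the forcing into half
of the dissipation, and Poincaré again gives `2α E ≤ 2α (κ + λ₁⁻¹) ‖u‖²`, so that
`E' + 2α E + β ‖u‖² ≤ M² / (ν λ₁)`. Multiplying by the integrating factor `e^{2αt}` and
integrating over `[0, t]` yields the estimate.
-/

open scoped RealInnerProductSpace
open Real Set intervalIntegral

theorem integral_exp_mul {a : ℝ} (ha : a ≠ 0) (t : ℝ) :
    ∫ s in (0 : ℝ)..t, exp (a * s) = (exp (a * t) - 1) / a := by
  rw [integral_comp_mul_left (fun x => exp x) ha, integral_exp, mul_zero, exp_zero,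
    smul_eq_mul, inv_mul_eq_div]

theorem add_exp_neg_mul_integral_le_of_hasDerivAt {E E' D : ℝ → ℝ} {a C t : ℝ}
    (ha : a ≠ 0) (ht : 0 ≤ t) (hE : ∀ s ∈ Icc 0 t, HasDerivAt E (E' s) s)
    (hD : ContinuousOn D (Icc 0 t)) (hineq : ∀ s ∈ Ioo 0 t, E' s + a * E s + D s ≤ C) :
    E t + exp (-a * t) * ∫ s in (0 : ℝ)..t, exp (a * s) * D s
      ≤ exp (-a * t) * E 0 + C * (1 - exp (-a * t)) / a := by
  have hexp : Continuous fun s => exp (a * s) := by fun_prop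
  have hG : ∀ s ∈ Icc 0 t,
      HasDerivAt (fun s => exp (a * s) * E s) (exp (a * s) * (E' s + a * E s)) s := by
    intro s hs
    refine (((hasDerivAt_id s).const_mul a).exp.mul (hE s hs)).congr_deriv ?_
    simp only [id]
    ring
  have hφ : ContinuousOn (fun s => exp (a * s) * (C - D s)) (Icc 0 t) :=
    hexp.continuousOn.mul (continuousOn_const.sub hD)
  have hmono := sub_le_integral_of_hasDeriv_right_of_le ht
    (fun s hs => (hG s hs).continuousAt.continuousWithinAt)
    (fun s hs => (hG s (Ioo_subset_Icc_self hs)).hasDerivWithinAt)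
    (hφ.integrableOn_Icc)
    (fun s hs => mul_le_mul_of_nonneg_left (by linarith [hineq s hs]) (exp_pos _).le)
  have hsplit : ∫ s in (0 : ℝ)..t, exp (a * s) * (C - D s)
      = C * ((exp (a * t) - 1) / a) - ∫ s in (0 : ℝ)..t, exp (a * s) * D s := by
    simp only [mul_sub]
    rw [integral_sub, integral_mul_const, integral_exp_mul ha, mul_comm]
    · exact (hexp.mul continuous_const).intervalIntegrable _ _
    · exact (hexp.continuousOn.mul hD).intervalIntegrable_of_Icc ht
  rw [hsplit] at hmono
  simp only [mul_zero, exp_zero, one_mul] at hmono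
  have hinv : exp (-a * t) * exp (a * t) = 1 := by rw [← exp_add]; simp
  have hscaled := mul_le_mul_of_nonneg_left hmono (exp_pos (-a * t)).le
  linear_combination hscaled + (C / a - E t) * hinv

section Energy

variable {V H : Type*} [NormedAddCommGroup V] [NormedAddCommGroup H] [InnerProductSpace ℝ H]

theorem real_inner_le_half_mul_norm_sq_add {v : V} {w g : H} {lam1 ν M : ℝ}
    (hlam1 : 0 < lam1) (hν : 0 < ν) (hP : ‖w‖ ^ 2 ≤ lam1⁻¹ * ‖v‖ ^ 2) (hg : ‖g‖ ≤ M) :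
    ⟪g, w⟫ ≤ ν / 2 * ‖v‖ ^ 2 + M ^ 2 / (2 * (ν * lam1)) := by
  have hyoung : ‖g‖ * ‖w‖ ≤ ν * lam1 / 2 * ‖w‖ ^ 2 + ‖g‖ ^ 2 / (2 * (ν * lam1)) := by
    have hsq : 0 ≤ (ν * lam1 * ‖w‖ - ‖g‖) ^ 2 / (2 * (ν * lam1)) := by positivity
    field_simp at hsq ⊢
    nlinarith
  have hpoinc : ν * lam1 / 2 * ‖w‖ ^ 2 ≤ ν / 2 * ‖v‖ ^ 2 := by
    calc ν * lam1 / 2 * ‖w‖ ^ 2 ≤ ν * lam1 / 2 * (lam1⁻¹ * ‖v‖ ^ 2) := by gcongr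
      _ = ν / 2 * ‖v‖ ^ 2 := by field_simp
  have hforce : ‖g‖ ^ 2 / (2 * (ν * lam1)) ≤ M ^ 2 / (2 * (ν * lam1)) := by gcongr
  linarith [real_inner_le_norm g w]

theorem energy_rate_add_dissipation_le {v : V} {w g : H} {p lam1 κ ν α M : ℝ}
    (hlam1 : 0 < lam1) (hν : 0 < ν) (hα : 0 ≤ α) (hP : ‖w‖ ^ 2 ≤ lam1⁻¹ * ‖v‖ ^ 2)
    (hg : ‖g‖ ≤ M) (hen : p + ν * ‖v‖ ^ 2 ≤ ⟪g, w⟫) :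
    2 * p + 2 * α * (‖w‖ ^ 2 + κ * ‖v‖ ^ 2) + (ν - 2 * α * (κ + lam1⁻¹)) * ‖v‖ ^ 2
      ≤ M ^ 2 / (ν * lam1) := by
  have hforce := real_inner_le_half_mul_norm_sq_add hlam1 hν hP hg
  have hαP : 2 * α * ‖w‖ ^ 2 ≤ 2 * α * (lam1⁻¹ * ‖v‖ ^ 2) := by gcongr
  have hhalf : M ^ 2 / (2 * (ν * lam1)) * 2 = M ^ 2 / (ν * lam1) := by field_simp
  linarith

end Energy

theorem kelvin_voigt_weighted_energy_estimate_general
    {H : Type*} [NormedAddCommGroup H] [InnerProductSpace ℝ H]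
    {V : Type*} [NormedAddCommGroup V] [InnerProductSpace ℝ V]
    (ι : V →ₗ[ℝ] H)
    (lam1 : ℝ) (hlam1 : 0 < lam1)
    (hPoincare : ∀ v : V, ‖ι v‖ ^ 2 ≤ lam1⁻¹ * ‖v‖ ^ 2)
    (κ ν α M : ℝ) (hν : 0 < ν)
    (hα : 0 < α)
    (β : ℝ) (hβ : β = ν - 2 * α * (κ + lam1⁻¹))
    (u : ℝ → V) (u' : ℝ → V)
    (hu : ∀ t ≥ (0 : ℝ), HasDerivAt u (u' t) t)
    (hιu : ∀ t ≥ (0 : ℝ), HasDerivAt (fun s => ι (u s)) (ι (u' t)) t)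
    (f : ℝ → H) (hf : ∀ t ≥ (0 : ℝ), ‖f t‖ ≤ M)
    (henergy : ∀ t ≥ (0 : ℝ),
      ⟪ι (u' t), ι (u t)⟫ + κ * ⟪u' t, u t⟫ + ν * ‖u t‖ ^ 2
        ≤ ⟪f t, ι (u t)⟫) :
    ∀ t ≥ (0 : ℝ),
      ‖ι (u t)‖ ^ 2 + κ * ‖u t‖ ^ 2
          + β * Real.exp (-2 * α * t)
              * ∫ s in (0 : ℝ)..t, Real.exp (2 * α * s) * ‖u s‖ ^ 2
        ≤ Real.exp (-2 * α * t) * (‖ι (u 0)‖ ^ 2 + κ * ‖u 0‖ ^ 2)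
          + ((1 - Real.exp (-2 * α * t)) / (2 * ν * lam1 * α)) * M ^ 2 := by
  intro t ht
  have key := add_exp_neg_mul_integral_le_of_hasDerivAt (t := t) (a := 2 * α)
    (E := fun s => ‖ι (u s)‖ ^ 2 + κ * ‖u s‖ ^ 2)
    (E' := fun s => 2 * (⟪ι (u' s), ι (u s)⟫ + κ * ⟪u' s, u s⟫))
    (D := fun s => β * ‖u s‖ ^ 2) (C := M ^ 2 / (ν * lam1)) (by positivity) ht
    (fun s hs => ((hιu s hs.1).norm_sq.add ((hu s hs.1).norm_sq.const_mul κ)).congr_deriv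
      (by rw [real_inner_comm (ι (u s)), real_inner_comm (u s)]; ring))
    (fun s hs => (((hu s hs.1).continuousAt.norm.pow 2).const_mul β).continuousWithinAt)
    (fun s hs => hβ ▸ energy_rate_add_dissipation_le hlam1 hν hα.le (hPoincare (u s))
      (hf s hs.1.le) (henergy s hs.1.le))
  have hI : ∫ s in (0 : ℝ)..t, Real.exp (2 * α * s) * (β * ‖u s‖ ^ 2)
      = β * ∫ s in (0 : ℝ)..t, Real.exp (2 * α * s) * ‖u s‖ ^ 2 := by
    simp only [mul_left_comm _ β, intervalIntegral.integral_const_mul]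
  rw [hI, show -(2 * α) * t = -2 * α * t by ring] at key
  convert key using 1
  · ring
  · field_simp

/-- Abstract energy setting for the Kelvin–Voigt model: weighted energy
estimate (Lemma 3.1, eq. (3.3)). -/
theorem kelvin_voigt_weighted_energy_estimate
    {H : Type*} [NormedAddCommGroup H] [InnerProductSpace ℝ H] [CompleteSpace H]
    {V : Type*} [NormedAddCommGroup V] [InnerProductSpace ℝ V]
    (ι : V →ₗ[ℝ] H)
    (lam1 : ℝ) (hlam1 : 0 < lam1)
    (hPoincare : ∀ v : V, ‖ι v‖ ^ 2 ≤ lam1⁻¹ * ‖v‖ ^ 2)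
    (κ ν α M : ℝ) (hκ : 0 < κ) (hν : 0 < ν)
    (hα : 0 < α) (hα' : α < ν * lam1 / (4 * (1 + κ * lam1)))
    (β : ℝ) (hβ : β = ν - 2 * α * (κ + lam1⁻¹))
    (u : ℝ → V) (u' : ℝ → V)
    (hu : ∀ t ≥ (0 : ℝ), HasDerivAt u (u' t) t)
    (hιu : ∀ t ≥ (0 : ℝ), HasDerivAt (fun s => ι (u s)) (ι (u' t)) t)
    (f : ℝ → H) (hf : ∀ t ≥ (0 : ℝ), ‖f t‖ ≤ M)
    (henergy : ∀ t ≥ (0 : ℝ),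
      ⟪ι (u' t), ι (u t)⟫ + κ * ⟪u' t, u t⟫ + ν * ‖u t‖ ^ 2
        ≤ ⟪f t, ι (u t)⟫) :
    ∀ t ≥ (0 : ℝ),
      ‖ι (u t)‖ ^ 2 + κ * ‖u t‖ ^ 2
          + β * Real.exp (-2 * α * t)
              * ∫ s in (0 : ℝ)..t, Real.exp (2 * α * s) * ‖u s‖ ^ 2
        ≤ Real.exp (-2 * α * t) * (‖ι (u 0)‖ ^ 2 + κ * ‖u 0‖ ^ 2)
          + ((1 - Real.exp (-2 * α * t)) / (2 * ν * lam1 * α)) * M ^ 2 :=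
  kelvin_voigt_weighted_energy_estimate_general ι lam1 hlam1 hPoincare κ ν α M hν hα β hβ u u' hu
    hιu f hf henergy
end

section
/- Under the abstract energy setting for the Kelvin–Voigt model, the asymptotic bound (eq. (3.13)) of Lemma 3.1 holds: limsup_{t→∞} ( ‖ι u(t)‖_H² + κ ‖u(t)‖_V² ) ≤ M² / (2 ν λ₁ α). -/
/-!
Along a trajectory the energy `E = ‖ι u‖² + κ ‖u‖²` satisfies `E' ≤ -2αE + M² / (ν λ₁)`:
test the equation with `u`, split the forcing term by Young's inequality with weight `ν λ₁`, and
absorb `‖ι u‖²` into `‖u‖²` by Poincaré; the smallness of `α` is exactly what makes the remaining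
dissipation `ν ‖u‖²` dominate `2αE`. Grönwall's inequality then bounds `E` by a function
decaying to `M² / (2 ν λ₁ α)`.
-/

open scoped RealInnerProductSpace
open Filter Topology Real

theorem le_gronwallBound_of_hasDerivAt_le {f f' : ℝ → ℝ} {K ε : ℝ}
    (hf : ∀ t ≥ 0, HasDerivAt f (f' t) t) (bound : ∀ t ≥ 0, f' t ≤ K * f t + ε)
    {t : ℝ} (ht : 0 ≤ t) : f t ≤ gronwallBound (f 0) K ε t := by
  simpa using le_gronwallBound_of_liminf_deriv_right_le (a := 0) (b := t)
    (fun x hx => (hf x hx.1).continuousAt.continuousWithinAt)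
    (fun x hx _ hr => (hf x hx.1).hasDerivWithinAt.liminf_right_slope_le hr) le_rfl
    (fun x hx => bound x hx.1) t ⟨ht, le_rfl⟩

theorem tendsto_gronwallBound_atTop_of_neg {δ K ε : ℝ} (hK : K < 0) :
    Tendsto (gronwallBound δ K ε) atTop (𝓝 (-(ε / K))) := by
  have hexp : Tendsto (fun x => exp (K * x)) atTop (𝓝 0) :=
    tendsto_exp_atBot.comp (tendsto_id.const_mul_atTop_of_neg hK)
  rw [gronwallBound_of_K_ne_0 hK.ne]
  convert (hexp.const_mul δ).add ((hexp.sub_const 1).const_mul (ε / K)) using 2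
  ring

theorem two_mul_inner_le_of_norm_le {H : Type*} [NormedAddCommGroup H] [InnerProductSpace ℝ H]
    {g w : H} {M c : ℝ} (hg : ‖g‖ ≤ M) (hc : 0 < c) :
    2 * ⟪g, w⟫ ≤ c * ‖w‖ ^ 2 + M ^ 2 / c := by
  have hgw : ⟪g, w⟫ ≤ M * ‖w‖ :=
    (real_inner_le_norm g w).trans (mul_le_mul_of_nonneg_right hg (norm_nonneg w))
  have hyoung : 2 * (M * ‖w‖) ≤ c * ‖w‖ ^ 2 + M ^ 2 / c := by
    rw [← sub_nonneg]
    have : c * ‖w‖ ^ 2 + M ^ 2 / c - 2 * (M * ‖w‖) = (c * ‖w‖ - M) ^ 2 / c := by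
      field_simp; ring
    rw [this]; positivity
  linarith

theorem two_mul_mul_add_inv_le {lam1 κ ν α : ℝ} (hlam1 : 0 < lam1) (hκ : 0 ≤ κ)
    (hα : 0 ≤ α) (hα' : α < ν * lam1 / (4 * (1 + κ * lam1))) :
    2 * α * (κ + lam1⁻¹) ≤ ν := by
  rw [lt_div_iff₀ (by positivity)] at hα'
  have : 2 * α * (κ + lam1⁻¹) = α * (4 * (1 + κ * lam1)) / (2 * lam1) := by
    field_simp; ring
  rw [this, div_le_iff₀ (by positivity)]
  nlinarith [mul_nonneg hα (mul_nonneg hκ hlam1.le)]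

theorem energy_deriv_le {H V : Type*} [NormedAddCommGroup H] [InnerProductSpace ℝ H]
    [NormedAddCommGroup V] [InnerProductSpace ℝ V] {w w' g : H} {v v' : V}
    {lam1 κ ν α M : ℝ} (hlam1 : 0 < lam1) (hν : 0 < ν) (hα : 0 ≤ α)
    (hrate : 2 * α * (κ + lam1⁻¹) ≤ ν) (hPoincare : ‖w‖ ^ 2 ≤ lam1⁻¹ * ‖v‖ ^ 2)
    (hg : ‖g‖ ≤ M) (henergy : ⟪w', w⟫ + κ * ⟪v', v⟫ + ν * ‖v‖ ^ 2 ≤ ⟪g, w⟫) :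
    2 * ⟪w, w'⟫ + κ * (2 * ⟪v, v'⟫) ≤ -(2 * α) * (‖w‖ ^ 2 + κ * ‖v‖ ^ 2) + M ^ 2 / (ν * lam1) := by
  have hforce := two_mul_inner_le_of_norm_le (w := w) hg (mul_pos hν hlam1)
  have hνPoincare : ν * lam1 * ‖w‖ ^ 2 ≤ ν * ‖v‖ ^ 2 := by
    calc ν * lam1 * ‖w‖ ^ 2 ≤ ν * lam1 * (lam1⁻¹ * ‖v‖ ^ 2) := by gcongr
      _ = ν * ‖v‖ ^ 2 := by field_simp
  have hαPoincare : 2 * α * ‖w‖ ^ 2 ≤ 2 * α * (lam1⁻¹ * ‖v‖ ^ 2) := by gcongr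
  have hνrate := mul_le_mul_of_nonneg_right hrate (sq_nonneg ‖v‖)
  rw [real_inner_comm w', real_inner_comm v']
  linarith

theorem kelvin_voigt_energy_limsup_general
    {H : Type*} [NormedAddCommGroup H] [InnerProductSpace ℝ H]
    {V : Type*} [NormedAddCommGroup V] [InnerProductSpace ℝ V]
    (ι : V →ₗ[ℝ] H)
    (lam1 : ℝ) (hlam1 : 0 < lam1)
    (hPoincare : ∀ v : V, ‖ι v‖ ^ 2 ≤ lam1⁻¹ * ‖v‖ ^ 2)
    (κ ν α M : ℝ) (hκ : 0 < κ) (hν : 0 < ν)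
    (hα : 0 < α) (hα' : α < ν * lam1 / (4 * (1 + κ * lam1)))
    (u : ℝ → V) (u' : ℝ → V)
    (hu : ∀ t ≥ (0 : ℝ), HasDerivAt u (u' t) t)
    (hιu : ∀ t ≥ (0 : ℝ), HasDerivAt (fun s => ι (u s)) (ι (u' t)) t)
    (f : ℝ → H) (hf : ∀ t ≥ (0 : ℝ), ‖f t‖ ≤ M)
    (henergy : ∀ t ≥ (0 : ℝ),
      ⟪ι (u' t), ι (u t)⟫ + κ * ⟪u' t, u t⟫ + ν * ‖u t‖ ^ 2
        ≤ ⟪f t, ι (u t)⟫)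
    :
    Filter.limsup (fun t => ‖ι (u t)‖ ^ 2 + κ * ‖u t‖ ^ 2) Filter.atTop
      ≤ M ^ 2 / (2 * ν * lam1 * α) := by
  set E : ℝ → ℝ := fun t => ‖ι (u t)‖ ^ 2 + κ * ‖u t‖ ^ 2
  have hrate := two_mul_mul_add_inv_le hlam1 hκ.le hα.le hα'
  have hE : ∀ t ≥ 0, HasDerivAt E (2 * ⟪ι (u t), ι (u' t)⟫ + κ * (2 * ⟪u t, u' t⟫)) t :=
    fun t ht => (hιu t ht).norm_sq.add ((hu t ht).norm_sq.const_mul κ)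
  have hbound : ∀ t ≥ 0, E t ≤ gronwallBound (E 0) (-(2 * α)) (M ^ 2 / (ν * lam1)) t :=
    fun t => le_gronwallBound_of_hasDerivAt_le hE fun s hs =>
      energy_deriv_le hlam1 hν hα.le hrate (hPoincare _) (hf s hs) (henergy s hs)
  have hlim := tendsto_gronwallBound_atTop_of_neg (δ := E 0) (ε := M ^ 2 / (ν * lam1))
    (neg_lt_zero.2 (mul_pos two_pos hα))
  have hE_nonneg : ∀ t, 0 ≤ E t := fun t => by positivity
  calc limsup E atTop ≤ -(M ^ 2 / (ν * lam1) / -(2 * α)) :=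
        (limsup_le_limsup (eventually_atTop.2 ⟨0, hbound⟩)
          (isCoboundedUnder_le_of_le atTop hE_nonneg) hlim.isBoundedUnder_le).trans_eq
          hlim.limsup_eq
    _ = M ^ 2 / (2 * ν * lam1 * α) := by field_simp

/-- Abstract energy setting for the Kelvin–Voigt model: asymptotic bound
(Lemma 3.1, eq. (3.13)). -/
theorem kelvin_voigt_energy_limsup
    {H : Type*} [NormedAddCommGroup H] [InnerProductSpace ℝ H] [CompleteSpace H]
    {V : Type*} [NormedAddCommGroup V] [InnerProductSpace ℝ V]
    (ι : V →ₗ[ℝ] H)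
    (lam1 : ℝ) (hlam1 : 0 < lam1)
    (hPoincare : ∀ v : V, ‖ι v‖ ^ 2 ≤ lam1⁻¹ * ‖v‖ ^ 2)
    (κ ν α M : ℝ) (hκ : 0 < κ) (hν : 0 < ν)
    (hα : 0 < α) (hα' : α < ν * lam1 / (4 * (1 + κ * lam1)))
    (β : ℝ) (hβ : β = ν - 2 * α * (κ + lam1⁻¹))
    (u : ℝ → V) (u' : ℝ → V)
    (hu : ∀ t ≥ (0 : ℝ), HasDerivAt u (u' t) t)
    (hιu : ∀ t ≥ (0 : ℝ), HasDerivAt (fun s => ι (u s)) (ι (u' t)) t)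
    (f : ℝ → H) (hf : ∀ t ≥ (0 : ℝ), ‖f t‖ ≤ M)
    (henergy : ∀ t ≥ (0 : ℝ),
      ⟪ι (u' t), ι (u t)⟫ + κ * ⟪u' t, u t⟫ + ν * ‖u t‖ ^ 2
        ≤ ⟪f t, ι (u t)⟫)
    :
    Filter.limsup (fun t => ‖ι (u t)‖ ^ 2 + κ * ‖u t‖ ^ 2) Filter.atTop
      ≤ M ^ 2 / (2 * ν * lam1 * α) :=
  kelvin_voigt_energy_limsup_general ι lam1 hlam1 hPoincare κ ν α M hκ hν hα hα' u u' hu hιu f hf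
    henergy
end

section
/- Under the abstract energy setting for the Kelvin–Voigt model, the rigorous form of the gradient asymptotics of Lemma 3.1 (eq. (3.4)) holds: liminf_{t→∞} ‖u(t)‖_V² ≤ M² / (β ν λ₁); in particular, since β ≥ ν/2, liminf_{t→∞} ‖u(t)‖_V² ≤ 2 M² / (λ₁ ν²). -/
open scoped RealInnerProductSpace

/-!
The energy `E = ‖ι u‖² + κ ‖u‖²` satisfies, by the energy inequality, Cauchy–Schwarz, Poincaré
and Young, `E' ≤ ν (M² / (ν² λ₁) - ‖u‖²)`. If `‖u‖²` stayed above `M² / (ν² λ₁) + ε` from some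
time on, `E` would decrease at least linearly and eventually become negative. Hence
`liminf ‖u‖² ≤ M² / (ν² λ₁)`, which implies both bounds because `0 < β ≤ ν`.
-/

open Filter Set

lemma le_sub_mul_of_hasDerivAt_le_neg {E E' : ℝ → ℝ} {a k : ℝ}
    (hE : ∀ t ≥ a, HasDerivAt E (E' t) t) (hE' : ∀ t ≥ a, E' t ≤ -k) {t : ℝ} (ht : a ≤ t) :
    E t ≤ E a - k * (t - a) := by
  have hderiv : ∀ s ∈ interior (Ici a), deriv E s ≤ -k := fun s hs => by
    rw [interior_Ici] at hs
    rw [(hE s hs.le).deriv]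
    exact hE' s hs.le
  have := (convex_Ici a).image_sub_le_mul_sub_of_deriv_le
    (fun s hs => (hE s hs).continuousAt.continuousWithinAt)
    (fun s hs => (hE s (interior_subset hs)).differentiableAt.differentiableWithinAt)
    hderiv a self_mem_Ici t ht ht
  linarith

lemma frequently_le_of_hasDerivAt_le_mul_sub {E E' g : ℝ → ℝ} {t₀ c C m : ℝ} (hc : 0 < c)
    (hE : ∀ t ≥ t₀, HasDerivAt E (E' t) t) (hE_lb : ∀ t ≥ t₀, m ≤ E t)
    (hE' : ∀ t ≥ t₀, E' t ≤ c * (C - g t)) {C' : ℝ} (hC' : C < C') :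
    ∃ᶠ t in atTop, g t ≤ C' := by
  rw [frequently_atTop]
  intro T
  by_contra! hg
  set a := max T t₀
  set k := c * (C' - C)
  have hk : 0 < k := mul_pos hc (sub_pos.mpr hC')
  have hslope : ∀ t ≥ a, E' t ≤ -k := fun t ht => by
    have := hg t (le_of_max_le_left ht)
    nlinarith [hE' t (le_of_max_le_right ht)]
  -- by time `t` the decrease at rate `k` has pushed `E` below `m`
  set t := a + (E a - m + 1) / k
  have hat : a ≤ t := le_add_of_nonneg_right <|
    div_nonneg (by linarith [hE_lb a (le_max_right _ _)]) hk.le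
  have hdrop : k * (t - a) = E a - m + 1 := by
    simp only [t, add_sub_cancel_left]
    field_simp
  linarith [le_sub_mul_of_hasDerivAt_le_neg (fun s hs => hE s ((le_max_right _ _).trans hs))
    hslope hat, hE_lb t ((le_max_right _ _).trans hat)]

lemma liminf_le_of_hasDerivAt_le_mul_sub {E E' g : ℝ → ℝ} {t₀ c C m : ℝ} (hc : 0 < c)
    (hE : ∀ t ≥ t₀, HasDerivAt E (E' t) t) (hE_lb : ∀ t ≥ t₀, m ≤ E t)
    (hE' : ∀ t ≥ t₀, E' t ≤ c * (C - g t)) (hg : IsBoundedUnder (· ≥ ·) atTop g) :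
    liminf g atTop ≤ C :=
  le_of_forall_gt_imp_ge_of_dense fun _ hC' =>
    liminf_le_of_frequently_le (frequently_le_of_hasDerivAt_le_mul_sub hc hE hE_lb hE' hC') hg

lemma mul_le_half_mul_sq_add_sq_div {m x y ν lam : ℝ} (hν : 0 < ν) (hlam : 0 < lam)
    (hxy : lam * x ^ 2 ≤ y ^ 2) :
    m * x ≤ ν / 2 * y ^ 2 + m ^ 2 / (2 * ν * lam) := by
  have hpos : 0 < 2 * ν * lam := by positivity
  rw [← mul_le_mul_iff_right₀ hpos, mul_add, mul_div_cancel₀ _ hpos.ne']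
  nlinarith [sq_nonneg (ν * lam * x - m),
    mul_le_mul_of_nonneg_left hxy (by positivity : 0 ≤ ν ^ 2 * lam)]

section Energy

variable {H V : Type*} [NormedAddCommGroup H] [InnerProductSpace ℝ H]
  [NormedAddCommGroup V] [InnerProductSpace ℝ V]

def kelvinVoigtEnergy (ι : V →ₗ[ℝ] H) (κ : ℝ) (v : V) : ℝ := ‖ι v‖ ^ 2 + κ * ‖v‖ ^ 2

lemma kelvinVoigtEnergy_nonneg (ι : V →ₗ[ℝ] H) {κ : ℝ} (hκ : 0 ≤ κ) (v : V) :
    0 ≤ kelvinVoigtEnergy ι κ v := by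
  unfold kelvinVoigtEnergy
  positivity

lemma hasDerivAt_kelvinVoigtEnergy {ι : V →ₗ[ℝ] H} (κ : ℝ) {u : ℝ → V} {u' : V} {t : ℝ}
    (hu : HasDerivAt u u' t) (hιu : HasDerivAt (fun s => ι (u s)) (ι u') t) :
    HasDerivAt (fun s => kelvinVoigtEnergy ι κ (u s))
      (2 * (⟪ι (u t), ι u'⟫ + κ * ⟪u t, u'⟫)) t :=
  (hιu.norm_sq.add (hu.norm_sq.const_mul κ)).congr_deriv (by ring)

/-- With `x = ι v` and `x' = ι v'`, the left-hand side is the time derivative of the energy. -/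
lemma two_mul_inner_add_le_of_energy_le {x x' : H} {v v' : V} {a : H} {κ ν lam M : ℝ}
    (hν : 0 < ν) (hlam : 0 < lam) (hP : ‖x‖ ^ 2 ≤ lam⁻¹ * ‖v‖ ^ 2) (ha : ‖a‖ ≤ M)
    (henergy : ⟪x', x⟫ + κ * ⟪v', v⟫ + ν * ‖v‖ ^ 2 ≤ ⟪a, x⟫) :
    2 * (⟪x, x'⟫ + κ * ⟪v, v'⟫) ≤ ν * (M ^ 2 / (ν ^ 2 * lam) - ‖v‖ ^ 2) := by
  have hPoincare : lam * ‖x‖ ^ 2 ≤ ‖v‖ ^ 2 := by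
    rwa [← le_div_iff₀' hlam, div_eq_inv_mul]
  have hforce : ⟪a, x⟫ ≤ ν / 2 * ‖v‖ ^ 2 + M ^ 2 / (2 * ν * lam) := calc
    ⟪a, x⟫ ≤ ‖a‖ * ‖x‖ := real_inner_le_norm a x
    _ ≤ ν / 2 * ‖v‖ ^ 2 + ‖a‖ ^ 2 / (2 * ν * lam) :=
      mul_le_half_mul_sq_add_sq_div hν hlam hPoincare
    _ ≤ ν / 2 * ‖v‖ ^ 2 + M ^ 2 / (2 * ν * lam) := by
      gcongr
  have hconst : ν * (M ^ 2 / (ν ^ 2 * lam)) = 2 * (M ^ 2 / (2 * ν * lam)) := by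
    field_simp
  rw [real_inner_comm x, real_inner_comm v] at henergy
  rw [mul_sub, hconst]
  linarith

end Energy

lemma half_lt_sub_two_mul_mul_add_inv {ν κ lam α : ℝ} (hκ : 0 ≤ κ) (hlam : 0 < lam)
    (hα : α < ν * lam / (4 * (1 + κ * lam))) :
    ν / 2 < ν - 2 * α * (κ + lam⁻¹) := by
  have hκlam : 0 < 1 + κ * lam := by positivity
  have hsum : κ + lam⁻¹ = (1 + κ * lam) / lam := by field_simp; ring
  rw [lt_div_iff₀ (by positivity)] at hα
  rw [hsum, mul_div_assoc', sub_div' hlam.ne', lt_div_iff₀ hlam]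
  nlinarith

theorem kelvin_voigt_gradient_liminf_general
    {H : Type*} [NormedAddCommGroup H] [InnerProductSpace ℝ H]
    {V : Type*} [NormedAddCommGroup V] [InnerProductSpace ℝ V]
    (ι : V →ₗ[ℝ] H)
    (lam1 : ℝ) (hlam1 : 0 < lam1)
    (hPoincare : ∀ v : V, ‖ι v‖ ^ 2 ≤ lam1⁻¹ * ‖v‖ ^ 2)
    (κ ν α M : ℝ) (hκ : 0 < κ) (hν : 0 < ν)
    (hα : 0 < α) (hα' : α < ν * lam1 / (4 * (1 + κ * lam1)))
    (β : ℝ) (hβ : β = ν - 2 * α * (κ + lam1⁻¹))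
    (u : ℝ → V) (u' : ℝ → V)
    (hu : ∀ t ≥ (0 : ℝ), HasDerivAt u (u' t) t)
    (hιu : ∀ t ≥ (0 : ℝ), HasDerivAt (fun s => ι (u s)) (ι (u' t)) t)
    (f : ℝ → H) (hf : ∀ t ≥ (0 : ℝ), ‖f t‖ ≤ M)
    (henergy : ∀ t ≥ (0 : ℝ),
      ⟪ι (u' t), ι (u t)⟫ + κ * ⟪u' t, u t⟫ + ν * ‖u t‖ ^ 2
        ≤ ⟪f t, ι (u t)⟫)
    :
    Filter.liminf (fun t => ‖u t‖ ^ 2) Filter.atTop ≤ M ^ 2 / (β * ν * lam1)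
      ∧ Filter.liminf (fun t => ‖u t‖ ^ 2) Filter.atTop
          ≤ 2 * M ^ 2 / (lam1 * ν ^ 2) := by
  have hliminf : liminf (fun t => ‖u t‖ ^ 2) atTop ≤ M ^ 2 / (ν ^ 2 * lam1) :=
    liminf_le_of_hasDerivAt_le_mul_sub (t₀ := 0) (m := 0) hν
      (fun t ht => hasDerivAt_kelvinVoigtEnergy κ (hu t ht) (hιu t ht))
      (fun t _ => kelvinVoigtEnergy_nonneg ι hκ.le (u t))
      (fun t ht => two_mul_inner_add_le_of_energy_le hν hlam1 (hPoincare _) (hf t ht)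
        (henergy t ht))
      (isBoundedUnder_of ⟨0, fun t => sq_nonneg _⟩)
  have hβ_pos : 0 < β := by
    linarith [half_lt_sub_two_mul_mul_add_inv hκ.le hlam1 hα', half_pos hν]
  have hβ_le : β ≤ ν := by
    rw [hβ, sub_le_self_iff]
    positivity
  refine ⟨hliminf.trans ?_, hliminf.trans ?_⟩
  · apply div_le_div_of_nonneg_left (sq_nonneg M) (by positivity)
    rw [sq]
    gcongr
  · rw [mul_comm lam1]
    gcongr
    linarith [sq_nonneg M]

/-- Abstract energy setting for the Kelvin–Voigt model: rigorous gradient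
asymptotics (Lemma 3.1, eq. (3.4)). -/
theorem kelvin_voigt_gradient_liminf
    {H : Type*} [NormedAddCommGroup H] [InnerProductSpace ℝ H] [CompleteSpace H]
    {V : Type*} [NormedAddCommGroup V] [InnerProductSpace ℝ V]
    (ι : V →ₗ[ℝ] H)
    (lam1 : ℝ) (hlam1 : 0 < lam1)
    (hPoincare : ∀ v : V, ‖ι v‖ ^ 2 ≤ lam1⁻¹ * ‖v‖ ^ 2)
    (κ ν α M : ℝ) (hκ : 0 < κ) (hν : 0 < ν)
    (hα : 0 < α) (hα' : α < ν * lam1 / (4 * (1 + κ * lam1)))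
    (β : ℝ) (hβ : β = ν - 2 * α * (κ + lam1⁻¹))
    (u : ℝ → V) (u' : ℝ → V)
    (hu : ∀ t ≥ (0 : ℝ), HasDerivAt u (u' t) t)
    (hιu : ∀ t ≥ (0 : ℝ), HasDerivAt (fun s => ι (u s)) (ι (u' t)) t)
    (f : ℝ → H) (hf : ∀ t ≥ (0 : ℝ), ‖f t‖ ≤ M)
    (henergy : ∀ t ≥ (0 : ℝ),
      ⟪ι (u' t), ι (u t)⟫ + κ * ⟪u' t, u t⟫ + ν * ‖u t‖ ^ 2
        ≤ ⟪f t, ι (u t)⟫)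
    :
    Filter.liminf (fun t => ‖u t‖ ^ 2) Filter.atTop ≤ M ^ 2 / (β * ν * lam1)
      ∧ Filter.liminf (fun t => ‖u t‖ ^ 2) Filter.atTop
          ≤ 2 * M ^ 2 / (lam1 * ν ^ 2) :=
  kelvin_voigt_gradient_liminf_general ι lam1 hlam1 hPoincare κ ν α M hκ hν hα hα' β hβ u u' hu hιu
    f hf henergy
end

section
/- Under the abstract energy setting for the Kelvin–Voigt model with a dual-norm bounded forcing (Remark 3.2, eq. (3.16)): if instead of a uniform H-norm bound on f one assumes ⟨f(t), ι u(t)⟩_H ≤ F ‖u(t)‖_V for all t ≥ 0 with a constant F ≥ 0, then for every t ≥ 0, ‖ι u(t)‖_H² + κ ‖u(t)‖_V² + β e^{−2αt} ∫₀ᵗ e^{2αs} ‖u(s)‖_V² ds ≤ e^{−2αt} (‖ι u(0)‖_H² + κ ‖u(0)‖_V²) + ((1 − e^{−2αt})/(2 ν α)) F². -/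
/-!
Along the solution, the energy `E = ‖ι u‖² + κ ‖u‖²` satisfies the differential inequality
`E' + 2α E + β ‖u‖² ≤ F² / ν`: the energy inequality bounds the dissipation by `F ‖u‖ - ν ‖u‖²`,
Poincaré's inequality gives `2α E ≤ 2α (κ + λ₁⁻¹) ‖u‖²`, and Young's inequality absorbs
`2 F ‖u‖ - ν ‖u‖² ≤ F² / ν`. Multiplying by the integrating factor `e^{2αs}` and integrating
over `[0, t]` gives the estimate.
-/

open scoped RealInnerProductSpace

open Set Real MeasureTheory intervalIntegral

section IntegratingFactor

variable {E E' g : ℝ → ℝ} {a β C t : ℝ}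

theorem exp_mul_add_integral_le_of_hasDerivAt (ha : a ≠ 0) (ht : 0 ≤ t)
    (hEc : ContinuousOn E (Icc 0 t)) (hE : ∀ s ∈ Ioo 0 t, HasDerivAt E (E' s) s)
    (hg : ContinuousOn g (Icc 0 t)) (hineq : ∀ s ∈ Ioo 0 t, E' s + a * E s + β * g s ≤ C) :
    exp (a * t) * E t + β * ∫ s in (0 : ℝ)..t, exp (a * s) * g s
      ≤ E 0 + C * (exp (a * t) - 1) / a := by
  -- `h' = e^{as} (E' + a E - C) ≤ -β e^{as} g`, so the constant needs no separate integration.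
  set h : ℝ → ℝ := fun s => exp (a * s) * E s - C * exp (a * s) / a
  have hexp : ∀ s, HasDerivAt (fun s => exp (a * s)) (exp (a * s) * a) s := fun s => by
    simpa using ((hasDerivAt_id s).const_mul a).exp
  have hh : ∀ s ∈ Ioo 0 t, HasDerivAt h (exp (a * s) * (E' s + a * E s - C)) s := by
    intro s hs
    refine (((hexp s).mul (hE s hs)).sub (((hexp s).const_mul C).div_const a)).congr_deriv ?_
    field_simp
    ring
  have hhc : ContinuousOn h (Icc 0 t) := by
    have hc : Continuous fun s => exp (a * s) := by fun_prop
    exact (hc.continuousOn.mul hEc).sub ((hc.continuousOn.const_smul C).div_const a)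
  have hφ : IntegrableOn (fun s => -(β * (exp (a * s) * g s))) (Icc 0 t) :=
    (((by fun_prop : Continuous fun s => exp (a * s)).continuousOn.mul hg).const_smul β).neg
      |>.integrableOn_Icc
  have key := sub_le_integral_of_hasDeriv_right_of_le ht hhc
    (fun s hs => (hh s hs).hasDerivWithinAt) hφ fun s hs => by
      have := mul_le_mul_of_nonneg_left (hineq s hs) (exp_pos (a * s)).le
      linarith
  rw [intervalIntegral.integral_neg, intervalIntegral.integral_const_mul] at key
  simp only [h, mul_zero, exp_zero, one_mul, mul_one] at key
  have : C * (exp (a * t) - 1) / a = C * exp (a * t) / a - C / a := by ring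
  linarith

theorem add_mul_exp_neg_mul_integral_le_of_hasDerivAt (ha : a ≠ 0) (ht : 0 ≤ t)
    (hEc : ContinuousOn E (Icc 0 t)) (hE : ∀ s ∈ Ioo 0 t, HasDerivAt E (E' s) s)
    (hg : ContinuousOn g (Icc 0 t)) (hineq : ∀ s ∈ Ioo 0 t, E' s + a * E s + β * g s ≤ C) :
    E t + β * exp (-a * t) * ∫ s in (0 : ℝ)..t, exp (a * s) * g s
      ≤ exp (-a * t) * E 0 + (1 - exp (-a * t)) / a * C := by
  have hmain := exp_mul_add_integral_le_of_hasDerivAt ha ht hEc hE hg hineq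
  have hinv : exp (-a * t) * exp (a * t) = 1 := by rw [← exp_add]; simp
  have := mul_le_mul_of_nonneg_left hmain (exp_pos (-a * t)).le
  have lhs : exp (-a * t) * (exp (a * t) * E t + β * ∫ s in (0 : ℝ)..t, exp (a * s) * g s)
      = E t + β * exp (-a * t) * ∫ s in (0 : ℝ)..t, exp (a * s) * g s := by
    linear_combination E t * hinv
  have rhs : exp (-a * t) * (E 0 + C * (exp (a * t) - 1) / a)
      = exp (-a * t) * E 0 + (1 - exp (-a * t)) / a * C := by
    rw [div_eq_mul_inv, div_eq_mul_inv]
    linear_combination C * a⁻¹ * hinv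
  linarith

end IntegratingFactor

theorem two_mul_mul_sub_mul_sq_le_sq_div {ν : ℝ} (hν : 0 < ν) (F y : ℝ) :
    2 * F * y - ν * y ^ 2 ≤ F ^ 2 / ν := by
  rw [le_div_iff₀ hν]
  nlinarith [sq_nonneg (ν * y - F)]

section EnergyDissipation

variable {H V : Type*} [NormedAddCommGroup H] [InnerProductSpace ℝ H]
  [NormedAddCommGroup V] [InnerProductSpace ℝ V]

theorem energy_deriv_add_le_of_energy_inequality (ι : V →ₗ[ℝ] H) {lam1 κ ν α F : ℝ}
    (hν : 0 < ν) (hα : 0 ≤ α) {x x' : V} (hPoincare : ‖ι x‖ ^ 2 ≤ lam1⁻¹ * ‖x‖ ^ 2)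
    (henergy : ⟪ι x', ι x⟫ + κ * ⟪x', x⟫ + ν * ‖x‖ ^ 2 ≤ F * ‖x‖) :
    2 * ⟪ι x, ι x'⟫ + κ * (2 * ⟪x, x'⟫) + 2 * α * (‖ι x‖ ^ 2 + κ * ‖x‖ ^ 2)
        + (ν - 2 * α * (κ + lam1⁻¹)) * ‖x‖ ^ 2
      ≤ F ^ 2 / ν := by
  rw [real_inner_comm (ι x') (ι x), real_inner_comm x' x]
  have hdecay := mul_le_mul_of_nonneg_left hPoincare (by positivity : (0 : ℝ) ≤ 2 * α)
  have hyoung := two_mul_mul_sub_mul_sq_le_sq_div hν F ‖x‖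
  linarith

end EnergyDissipation

theorem kelvin_voigt_weighted_energy_estimate_dual_forcing_general
    {H : Type*} [NormedAddCommGroup H] [InnerProductSpace ℝ H]
    {V : Type*} [NormedAddCommGroup V] [InnerProductSpace ℝ V]
    (ι : V →ₗ[ℝ] H)
    (lam1 : ℝ)
    (hPoincare : ∀ v : V, ‖ι v‖ ^ 2 ≤ lam1⁻¹ * ‖v‖ ^ 2)
    (κ ν α : ℝ) (hν : 0 < ν)
    (hα : 0 < α)
    (β : ℝ) (hβ : β = ν - 2 * α * (κ + lam1⁻¹))
    (u : ℝ → V) (u' : ℝ → V)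
    (hu : ∀ t ≥ (0 : ℝ), HasDerivAt u (u' t) t)
    (hιu : ∀ t ≥ (0 : ℝ), HasDerivAt (fun s => ι (u s)) (ι (u' t)) t)
    (f : ℝ → H) (F : ℝ)
    (hfdual : ∀ t ≥ (0 : ℝ), ⟪f t, ι (u t)⟫ ≤ F * ‖u t‖)
    (henergy : ∀ t ≥ (0 : ℝ),
      ⟪ι (u' t), ι (u t)⟫ + κ * ⟪u' t, u t⟫ + ν * ‖u t‖ ^ 2
        ≤ ⟪f t, ι (u t)⟫) :
    ∀ t ≥ (0 : ℝ),
      ‖ι (u t)‖ ^ 2 + κ * ‖u t‖ ^ 2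
          + β * Real.exp (-2 * α * t)
              * ∫ s in (0 : ℝ)..t, Real.exp (2 * α * s) * ‖u s‖ ^ 2
        ≤ Real.exp (-2 * α * t) * (‖ι (u 0)‖ ^ 2 + κ * ‖u 0‖ ^ 2)
          + ((1 - Real.exp (-2 * α * t)) / (2 * ν * α)) * F ^ 2 := by
  intro t ht
  subst hβ
  have hE : ∀ s ≥ (0 : ℝ), HasDerivAt (fun s => ‖ι (u s)‖ ^ 2 + κ * ‖u s‖ ^ 2)
      (2 * ⟪ι (u s), ι (u' s)⟫ + κ * (2 * ⟪u s, u' s⟫)) s := fun s hs =>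
    (hιu s hs).norm_sq.add ((hu s hs).norm_sq.const_mul κ)
  have hineq := fun s (hs : s ∈ Ioo 0 t) =>
    energy_deriv_add_le_of_energy_inequality ι hν hα.le (hPoincare (u s))
      ((henergy s hs.1.le).trans (hfdual s hs.1.le))
  have hest := add_mul_exp_neg_mul_integral_le_of_hasDerivAt (g := fun s => ‖u s‖ ^ 2)
    (mul_ne_zero two_ne_zero hα.ne') ht
    (fun s hs => (hE s hs.1).continuousAt.continuousWithinAt)
    (fun s hs => hE s hs.1.le)
    (fun s hs => ((hu s hs.1).continuousAt.norm.pow 2).continuousWithinAt) hineq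
  have hconst : (1 - exp (-(2 * α) * t)) / (2 * α) * (F ^ 2 / ν)
      = (1 - exp (-2 * α * t)) / (2 * ν * α) * F ^ 2 := by
    rw [← neg_mul]
    field_simp
  rw [hconst, ← neg_mul] at hest
  exact hest

/-- Abstract energy setting for the Kelvin–Voigt model with dual-norm bounded
forcing (Remark 3.2, eq. (3.16)). -/
theorem kelvin_voigt_weighted_energy_estimate_dual_forcing
    {H : Type*} [NormedAddCommGroup H] [InnerProductSpace ℝ H] [CompleteSpace H]
    {V : Type*} [NormedAddCommGroup V] [InnerProductSpace ℝ V]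
    (ι : V →ₗ[ℝ] H)
    (lam1 : ℝ) (hlam1 : 0 < lam1)
    (hPoincare : ∀ v : V, ‖ι v‖ ^ 2 ≤ lam1⁻¹ * ‖v‖ ^ 2)
    (κ ν α : ℝ) (hκ : 0 < κ) (hν : 0 < ν)
    (hα : 0 < α) (hα' : α < ν * lam1 / (4 * (1 + κ * lam1)))
    (β : ℝ) (hβ : β = ν - 2 * α * (κ + lam1⁻¹))
    (u : ℝ → V) (u' : ℝ → V)
    (hu : ∀ t ≥ (0 : ℝ), HasDerivAt u (u' t) t)
    (hιu : ∀ t ≥ (0 : ℝ), HasDerivAt (fun s => ι (u s)) (ι (u' t)) t)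
    (f : ℝ → H) (F : ℝ) (hF : 0 ≤ F)
    (hfdual : ∀ t ≥ (0 : ℝ), ⟪f t, ι (u t)⟫ ≤ F * ‖u t‖)
    (henergy : ∀ t ≥ (0 : ℝ),
      ⟪ι (u' t), ι (u t)⟫ + κ * ⟪u' t, u t⟫ + ν * ‖u t‖ ^ 2
        ≤ ⟪f t, ι (u t)⟫) :
    ∀ t ≥ (0 : ℝ),
      ‖ι (u t)‖ ^ 2 + κ * ‖u t‖ ^ 2
          + β * Real.exp (-2 * α * t)
              * ∫ s in (0 : ℝ)..t, Real.exp (2 * α * s) * ‖u s‖ ^ 2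
        ≤ Real.exp (-2 * α * t) * (‖ι (u 0)‖ ^ 2 + κ * ‖u 0‖ ^ 2)
          + ((1 - Real.exp (-2 * α * t)) / (2 * ν * α)) * F ^ 2 :=
  kelvin_voigt_weighted_energy_estimate_dual_forcing_general ι lam1 hPoincare κ ν α hν hα β hβ u u'
    hu hιu f F hfdual henergy
end

section
/- Abstract form of Lemma 5.5 (estimate for the auxiliary error ρ = V_h u − v_h): in the abstract energy setting, let ρ : [0,∞) → V be differentiable with ρ(0) = 0 and ι∘ρ differentiable with (ι∘ρ)′(t) = ι(ρ′(t)), and let θ : [0,∞) → H be continuous. Assume that for all t ≥ 0, ⟨ι ρ′(t), ι ρ(t)⟩_H + κ ⟨ρ′(t), ρ(t)⟩_V + ν ‖ρ(t)‖_V² ≤ ‖θ(t)‖_H · ‖ι ρ(t)‖_H. Then for all t ≥ 0, ‖ι ρ(t)‖_H² + κ ‖ρ(t)‖_V² + 2β e^{−2αt} ∫₀ᵗ e^{2αs} ‖ρ(s)‖_V² ds ≤ (1 / (2 α λ₁ (κ + λ₁⁻¹))) · e^{−2αt} ∫₀ᵗ e^{2αs} ‖θ(s)‖_H² ds. -/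
/-! Write `E = ‖ι ρ‖² + κ ‖ρ‖²`, so that the hypothesis bounds `E' / 2 + ν ‖ρ‖²` by
`‖θ‖ ‖ι ρ‖`. Young's inequality with weight `μ = 2αλ₁(κ + λ₁⁻¹)` followed by the Poincaré
inequality turns this into `E' + 2αE + 2β ‖ρ‖² ≤ μ⁻¹ ‖θ‖²`. Multiplying by `e^{2αs}` makes the
left side the derivative of `e^{2αs} E` plus the dissipation term, and integrating over `[0, t]`,
where `E 0 = 0`, gives the estimate. -/

open scoped RealInnerProductSpace
open Set Real

theorem exp_mul_sub_le_integral_of_hasDerivAt {E E' g : ℝ → ℝ} {c a b : ℝ} (hab : a ≤ b)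
    (hEc : ContinuousOn E (Icc a b)) (hE : ∀ s ∈ Ioo a b, HasDerivAt E (E' s) s)
    (hg : ContinuousOn g (Icc a b)) (hle : ∀ s ∈ Ioo a b, E' s + c * E s ≤ g s) :
    exp (c * b) * E b - exp (c * a) * E a ≤ ∫ s in a..b, exp (c * s) * g s := by
  have hexp : Continuous fun s : ℝ => exp (c * s) := by fun_prop
  refine intervalIntegral.sub_le_integral_of_hasDeriv_right_of_le (g := fun s => exp (c * s) * E s)
    (g' := fun s => exp (c * s) * (c * 1) * E s + exp (c * s) * E' s) hab
    (hexp.continuousOn.mul hEc) (fun s hs => ?_)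
    ((hexp.continuousOn.mul hg).integrableOn_compact isCompact_Icc) (fun s hs => ?_)
  · exact ((((hasDerivAt_id s).const_mul c).exp).mul (hE s hs)).hasDerivWithinAt
  · nlinarith [hle s hs, exp_pos (c * s)]

theorem add_mul_exp_neg_mul_integral_le {E E' D F : ℝ → ℝ} {c d K t : ℝ} (ht : 0 ≤ t)
    (hEc : ContinuousOn E (Icc 0 t)) (hE : ∀ s ∈ Ioo 0 t, HasDerivAt E (E' s) s) (hE0 : E 0 = 0)
    (hD : ContinuousOn D (Icc 0 t)) (hF : ContinuousOn F (Icc 0 t))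
    (hle : ∀ s ∈ Ioo 0 t, E' s + c * E s + d * D s ≤ K * F s) :
    E t + d * exp (-c * t) * ∫ s in 0..t, exp (c * s) * D s
      ≤ K * (exp (-c * t) * ∫ s in 0..t, exp (c * s) * F s) := by
  have hint : ∀ {G : ℝ → ℝ}, ContinuousOn G (Icc 0 t) →
      IntervalIntegrable (fun s => exp (c * s) * G s) MeasureTheory.volume 0 t := fun hG =>
    ((Continuous.continuousOn (by fun_prop)).mul hG).intervalIntegrable_of_Icc ht
  have key := exp_mul_sub_le_integral_of_hasDerivAt (c := c) (g := fun s => K * F s - d * D s) ht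
    hEc hE ((hF.const_smul K).sub (hD.const_smul d)) fun s hs => by linarith [hle s hs]
  have hsplit : ∫ s in 0..t, exp (c * s) * (K * F s - d * D s)
      = K * (∫ s in 0..t, exp (c * s) * F s) - d * ∫ s in 0..t, exp (c * s) * D s := by
    simp only [mul_sub, mul_left_comm _ K, mul_left_comm _ d]
    rw [intervalIntegral.integral_sub ((hint hF).const_mul K) ((hint hD).const_mul d),
      intervalIntegral.integral_const_mul, intervalIntegral.integral_const_mul]
  rw [hsplit, hE0, mul_zero, sub_zero] at key
  have hinv : exp (-c * t) * exp (c * t) = 1 := by rw [← exp_add]; simp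
  calc E t + d * exp (-c * t) * ∫ s in 0..t, exp (c * s) * D s
      = exp (-c * t) * (exp (c * t) * E t + d * ∫ s in 0..t, exp (c * s) * D s) := by
        rw [mul_add, ← mul_assoc, hinv]; ring
    _ ≤ exp (-c * t) * (K * ∫ s in 0..t, exp (c * s) * F s) := by
        gcongr; linarith
    _ = _ := by ring

theorem young_poincare_estimate {lam1 κ ν α X a b r : ℝ} (hlam1 : 0 < lam1)
    (hm : 0 < κ + lam1⁻¹) (hα : 0 < α)
    (hX : X + ν * r ^ 2 ≤ a * b) (hb : b ^ 2 ≤ lam1⁻¹ * r ^ 2) :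
    2 * X + 2 * α * (b ^ 2 + κ * r ^ 2) + 2 * (ν - 2 * α * (κ + lam1⁻¹)) * r ^ 2
      ≤ 1 / (2 * α * lam1 * (κ + lam1⁻¹)) * a ^ 2 := by
  -- The Young weight μ makes the Poincaré bound on `(μ + 2α) b²` cancel every `r²` term exactly.
  set μ := 2 * α * lam1 * (κ + lam1⁻¹)
  have hμ : 0 < μ := by positivity
  have hyoung : 2 * (a * b) ≤ 1 / μ * a ^ 2 + μ * b ^ 2 := by
    rw [one_div_mul_eq_div, div_add' _ _ _ hμ.ne', le_div_iff₀ hμ]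
    nlinarith [sq_nonneg (a - μ * b)]
  have hμlam : μ * lam1⁻¹ = 2 * α * (κ + lam1⁻¹) := by
    simp only [μ]; field_simp
  nlinarith [mul_le_mul_of_nonneg_left hb (by positivity : 0 ≤ μ + 2 * α)]

theorem kelvin_voigt_auxiliary_error_estimate_general
    {H : Type*} [NormedAddCommGroup H] [InnerProductSpace ℝ H]
    {V : Type*} [NormedAddCommGroup V] [InnerProductSpace ℝ V]
    (ι : V →ₗ[ℝ] H)
    (lam1 : ℝ) (hlam1 : 0 < lam1)
    (hPoincare : ∀ v : V, ‖ι v‖ ^ 2 ≤ lam1⁻¹ * ‖v‖ ^ 2)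
    (κ ν α : ℝ) (hκ : 0 < κ)
    (hα : 0 < α)
    (β : ℝ) (hβ : β = ν - 2 * α * (κ + lam1⁻¹))
    (ρ : ℝ → V) (ρ' : ℝ → V)
    (hρ : ∀ t ≥ (0 : ℝ), HasDerivAt ρ (ρ' t) t)
    (hρ0 : ρ 0 = 0)
    (hιρ : ∀ t ≥ (0 : ℝ), HasDerivAt (fun s => ι (ρ s)) (ι (ρ' t)) t)
    (θ : ℝ → H) (hθ : Continuous θ)
    (hineq : ∀ t ≥ (0 : ℝ),
      ⟪ι (ρ' t), ι (ρ t)⟫ + κ * ⟪ρ' t, ρ t⟫ + ν * ‖ρ t‖ ^ 2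
        ≤ ‖θ t‖ * ‖ι (ρ t)‖) :
    ∀ t ≥ (0 : ℝ),
      ‖ι (ρ t)‖ ^ 2 + κ * ‖ρ t‖ ^ 2
          + 2 * β * Real.exp (-2 * α * t)
              * ∫ s in (0 : ℝ)..t, Real.exp (2 * α * s) * ‖ρ s‖ ^ 2
        ≤ (1 / (2 * α * lam1 * (κ + lam1⁻¹)))
            * (Real.exp (-2 * α * t)
                * ∫ s in (0 : ℝ)..t, Real.exp (2 * α * s) * ‖θ s‖ ^ 2) := by
  intro t ht
  have hE : ∀ s ≥ (0 : ℝ), HasDerivAt (fun u => ‖ι (ρ u)‖ ^ 2 + κ * ‖ρ u‖ ^ 2)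
      (2 * ⟪ι (ρ s), ι (ρ' s)⟫ + κ * (2 * ⟪ρ s, ρ' s⟫)) s := fun s hs =>
    (hιρ s hs).norm_sq.add ((hρ s hs).norm_sq.const_mul κ)
  have hρc : ContinuousOn (fun s => ‖ρ s‖ ^ 2) (Icc 0 t) := fun s hs =>
    ((hρ s hs.1).continuousAt.norm.pow 2).continuousWithinAt
  rw [show -2 * α * t = -(2 * α) * t by ring]
  refine add_mul_exp_neg_mul_integral_le ht
    (fun s hs => (hE s hs.1).continuousAt.continuousWithinAt) (fun s hs => hE s hs.1.le)
    (by simp [hρ0]) hρc (hθ.norm.pow 2).continuousOn fun s hs => ?_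
  rw [real_inner_comm (ι (ρ' s)), real_inner_comm (ρ' s), hβ]
  linarith [young_poincare_estimate (κ := κ) hlam1 (by positivity) hα (hineq s hs.1.le)
    (hPoincare (ρ s))]

/-- Abstract form of Lemma 5.5 (estimate for the auxiliary error
ρ = V_h u − v_h). -/
theorem kelvin_voigt_auxiliary_error_estimate
    {H : Type*} [NormedAddCommGroup H] [InnerProductSpace ℝ H] [CompleteSpace H]
    {V : Type*} [NormedAddCommGroup V] [InnerProductSpace ℝ V]
    (ι : V →ₗ[ℝ] H)
    (lam1 : ℝ) (hlam1 : 0 < lam1)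
    (hPoincare : ∀ v : V, ‖ι v‖ ^ 2 ≤ lam1⁻¹ * ‖v‖ ^ 2)
    (κ ν α : ℝ) (hκ : 0 < κ) (hν : 0 < ν)
    (hα : 0 < α) (hα' : α < ν * lam1 / (4 * (1 + κ * lam1)))
    (β : ℝ) (hβ : β = ν - 2 * α * (κ + lam1⁻¹))
    (ρ : ℝ → V) (ρ' : ℝ → V)
    (hρ : ∀ t ≥ (0 : ℝ), HasDerivAt ρ (ρ' t) t)
    (hρ0 : ρ 0 = 0)
    (hιρ : ∀ t ≥ (0 : ℝ), HasDerivAt (fun s => ι (ρ s)) (ι (ρ' t)) t)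
    (θ : ℝ → H) (hθ : Continuous θ)
    (hineq : ∀ t ≥ (0 : ℝ),
      ⟪ι (ρ' t), ι (ρ t)⟫ + κ * ⟪ρ' t, ρ t⟫ + ν * ‖ρ t‖ ^ 2
        ≤ ‖θ t‖ * ‖ι (ρ t)‖) :
    ∀ t ≥ (0 : ℝ),
      ‖ι (ρ t)‖ ^ 2 + κ * ‖ρ t‖ ^ 2
          + 2 * β * Real.exp (-2 * α * t)
              * ∫ s in (0 : ℝ)..t, Real.exp (2 * α * s) * ‖ρ s‖ ^ 2
        ≤ (1 / (2 * α * lam1 * (κ + lam1⁻¹)))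
            * (Real.exp (-2 * α * t)
                * ∫ s in (0 : ℝ)..t, Real.exp (2 * α * s) * ‖θ s‖ ^ 2) :=
  kelvin_voigt_auxiliary_error_estimate_general ι lam1 hlam1 hPoincare κ ν α hκ hα β hβ ρ ρ' hρ hρ0
    hιρ θ hθ hineq
end
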